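/- Fix real numbers d > 0, β > 0, c > 0 and set λ_1 = (−c + √(c² + 4βd))/(2d) and λ_2 = (c + √(c² + 4βd))/(2d), so that −λ_1 and λ_2 are the two roots of dλ² − cλ − β = 0. For a bounded continuous H : ℝ → ℝ define T[H](ξ) = (1/(d(λ_1 + λ_2))) (∫_{−∞}^{ξ} e^{−λ_1(ξ−s)} H(s) ds + ∫_{ξ}^{∞} e^{λ_2(ξ−s)} H(s) ds). Let 𝒩 > 0 and let H : ℝ → ℝ be continuous with 0 ≤ H(s) ≤ 𝒩 for all s. Then for every ξ ∈ ℝ and every δ > 0, |T[H](ξ + δ) − T[H](ξ)| ≤ max(|e^{−λ_1 δ} − 1|, |e^{λ_2 δ} − 1|) · 𝒩/β + δ 𝒩/(d(λ_1 + λ_2)) + δ e^{λ_2 δ} 𝒩/(d(λ_1 + λ_2)). In particular, T[H](ξ + δ) − T[H](ξ) → 0 as δ → 0, uniformly in ξ and uniformly over all such H. -/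

import Mathlib

/-! `T[H]` is a sum of a causal and an anticausal exponential convolution, and
the anticausal one is the causal one of `H(-·)` read at `-ξ`. For the causal convolution `A`,
`A(ξ + δ) = e^{-λδ} A(ξ) + ∫_ξ^{ξ+δ} e^{-λ(ξ+δ-s)} H(s) ds`, and `|A| ≤ 𝒩/λ` because the kernel has
mass `1/λ`; the weights `1/λ₁ + 1/λ₂` then combine with `1/(d(λ₁+λ₂))` to `1/β` by Vieta. -/

open MeasureTheory

/-- The scalar integral operator `T` of (4.13):
`T[H](ξ) = (1/(d(λ₁+λ₂))) (∫_{-∞}^{ξ} e^{-λ₁(ξ-s)} H(s) ds + ∫_{ξ}^{∞} e^{λ₂(ξ-s)} H(s) ds)`,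
where `-λ₁, λ₂` are the roots of `dλ² - cλ - β = 0`. -/
noncomputable def Tsc (d β c : ℝ) (H : ℝ → ℝ) (ξ : ℝ) : ℝ :=
  let l₁ : ℝ := (-c + Real.sqrt (c ^ 2 + 4 * β * d)) / (2 * d)
  let l₂ : ℝ := (c + Real.sqrt (c ^ 2 + 4 * β * d)) / (2 * d)
  (1 / (d * (l₁ + l₂))) *
    ((∫ s in Set.Iic ξ, Real.exp (-l₁ * (ξ - s)) * H s) +
     (∫ s in Set.Ici ξ, Real.exp (l₂ * (ξ - s)) * H s))

open Set Real

theorem abs_lt_sqrt_sq_add {a : ℝ} (ha : 0 < a) (c : ℝ) : |c| < √(c ^ 2 + a) :=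
  (lt_sqrt (abs_nonneg c)).2 (by rw [sq_abs]; linarith)

theorem mul_quadratic_roots {d β c : ℝ} (hd : d ≠ 0) (hD : 0 ≤ c ^ 2 + 4 * β * d) :
    d * ((-c + √(c ^ 2 + 4 * β * d)) / (2 * d) * ((c + √(c ^ 2 + 4 * β * d)) / (2 * d))) = β := by
  have hS := sq_sqrt hD
  rw [div_mul_div_comm, mul_div_assoc', div_eq_iff (by positivity)]
  linear_combination d * hS

section ExpConv

variable {l N : ℝ} {H : ℝ → ℝ}

theorem integrableOn_exp_neg_mul_sub_Iic (hl : 0 < l) (ξ : ℝ) :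
    IntegrableOn (fun s => exp (-l * (ξ - s))) (Iic ξ) := by
  simp_rw [mul_sub, sub_eq_add_neg, exp_add, neg_mul, neg_neg]
  exact (integrableOn_exp_mul_Iic hl ξ).const_mul _

theorem integral_exp_neg_mul_sub_Iic (hl : 0 < l) (ξ : ℝ) :
    ∫ s in Iic ξ, exp (-l * (ξ - s)) = 1 / l := by
  simp_rw [mul_sub, sub_eq_add_neg, exp_add, neg_mul, neg_neg]
  rw [integral_const_mul, integral_exp_mul_Iic hl, mul_div_assoc', ← exp_add, neg_add_cancel,
    exp_zero]

noncomputable def expConvIic (l : ℝ) (H : ℝ → ℝ) (ξ : ℝ) : ℝ :=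
  ∫ s in Iic ξ, exp (-l * (ξ - s)) * H s

noncomputable def expConvIci (l : ℝ) (H : ℝ → ℝ) (ξ : ℝ) : ℝ :=
  ∫ s in Ici ξ, exp (l * (ξ - s)) * H s

theorem expConvIci_eq_expConvIic_neg (l : ℝ) (H : ℝ → ℝ) (ξ : ℝ) :
    expConvIci l H ξ = expConvIic l (fun t => H (-t)) (-ξ) := by
  have h := integral_comp_neg_Iic (-ξ) fun s => exp (l * (ξ - s)) * H s
  rw [neg_neg] at h
  rw [expConvIci, expConvIic, integral_Ici_eq_integral_Ioi, ← h]
  congr 1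
  funext s
  ring_nf

theorem integrableOn_exp_neg_mul_sub_mul_Iic (hl : 0 < l) (hH : Measurable H)
    (hb : ∀ s, |H s| ≤ N) (ξ : ℝ) :
    IntegrableOn (fun s => exp (-l * (ξ - s)) * H s) (Iic ξ) :=
  (integrableOn_exp_neg_mul_sub_Iic hl ξ).mul_bdd hH.aestronglyMeasurable
    (Filter.Eventually.of_forall hb)

theorem abs_expConvIic_le (hl : 0 < l) (hb : ∀ s, |H s| ≤ N) (ξ : ℝ) :
    |expConvIic l H ξ| ≤ N / l := by
  have hk := (integrableOn_exp_neg_mul_sub_Iic hl ξ).mul_const N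
  have h := norm_integral_le_of_norm_le (f := fun s => exp (-l * (ξ - s)) * H s) hk
    (Filter.Eventually.of_forall fun s => by
    rw [norm_mul, Real.norm_of_nonneg (exp_pos _).le]
    exact mul_le_mul_of_nonneg_left (hb s) (exp_pos _).le)
  rwa [integral_mul_const, integral_exp_neg_mul_sub_Iic hl, one_div_mul_eq_div,
    Real.norm_eq_abs] at h

theorem expConvIic_add (hl : 0 < l) (hH : Measurable H) (hb : ∀ s, |H s| ≤ N) (ξ : ℝ)
    {δ : ℝ} (hδ : 0 ≤ δ) :
    expConvIic l H (ξ + δ) = exp (-l * δ) * expConvIic l H ξ +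
      ∫ s in Ioc ξ (ξ + δ), exp (-l * (ξ + δ - s)) * H s := by
  have hint := integrableOn_exp_neg_mul_sub_mul_Iic hl hH hb (ξ + δ)
  have hξδ : ξ ≤ ξ + δ := le_add_of_nonneg_right hδ
  rw [expConvIic, ← Iic_union_Ioc_eq_Iic hξδ, setIntegral_union (Iic_disjoint_Ioc le_rfl)
    measurableSet_Ioc (hint.mono_set (Iic_subset_Iic.2 hξδ))
    (hint.mono_set Ioc_subset_Iic_self), expConvIic, ← integral_const_mul]
  congr 1
  refine setIntegral_congr_fun measurableSet_Iic fun s _ => ?_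
  rw [← mul_assoc, ← exp_add]
  ring_nf

theorem abs_expConvIic_add_sub_le (hl : 0 < l) (hH : Measurable H) (hb : ∀ s, |H s| ≤ N)
    (ξ : ℝ) {δ : ℝ} (hδ : 0 ≤ δ) :
    |expConvIic l H (ξ + δ) - expConvIic l H ξ| ≤ |exp (-l * δ) - 1| * (N / l) + δ * N := by
  have hE : |∫ s in Ioc ξ (ξ + δ), exp (-l * (ξ + δ - s)) * H s| ≤ N * δ := by
    have h := norm_setIntegral_le_of_norm_le_const (μ := volume) measure_Ioc_lt_top
      fun s (hs : s ∈ Ioc ξ (ξ + δ)) => show ‖exp (-l * (ξ + δ - s)) * H s‖ ≤ N by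
        rw [norm_mul, Real.norm_of_nonneg (exp_pos _).le, Real.norm_eq_abs]
        have hexp : exp (-l * (ξ + δ - s)) ≤ 1 :=
          exp_le_one_iff.2 (mul_nonpos_of_nonpos_of_nonneg (by linarith) (by linarith [hs.2]))
        exact (mul_le_of_le_one_left (abs_nonneg _) hexp).trans (hb s)
    rwa [Real.norm_eq_abs, volume_real_Ioc_of_le (le_add_of_nonneg_right hδ), add_sub_cancel_left]
      at h
  rw [expConvIic_add hl hH hb ξ hδ]
  calc _ = |(exp (-l * δ) - 1) * expConvIic l H ξ +
          ∫ s in Ioc ξ (ξ + δ), exp (-l * (ξ + δ - s)) * H s| := by ring_nf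
    _ ≤ |exp (-l * δ) - 1| * |expConvIic l H ξ| +
          |∫ s in Ioc ξ (ξ + δ), exp (-l * (ξ + δ - s)) * H s| := by
        rw [← abs_mul]; exact abs_add_le _ _
    _ ≤ |exp (-l * δ) - 1| * (N / l) + δ * N := by
        rw [mul_comm δ]
        gcongr
        exact abs_expConvIic_le hl hb ξ

end ExpConv

theorem abs_exp_neg_sub_one_le {x : ℝ} (hx : 0 ≤ x) : |exp (-x) - 1| ≤ |exp x - 1| := by
  have h1 : 1 ≤ exp x := one_le_exp hx
  rw [abs_of_nonpos (by linarith [exp_le_one_iff.2 (neg_nonpos.2 hx)]), abs_of_nonneg (by linarith),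
    exp_neg]
  have : 0 < exp x := exp_pos x
  field_simp
  nlinarith

theorem abs_expConv_twoSided_add_sub_le {d β l₁ l₂ N : ℝ} {H : ℝ → ℝ} (hd : 0 < d) (hl₁ : 0 < l₁)
    (hl₂ : 0 < l₂) (hprod : d * (l₁ * l₂) = β) (hH : Measurable H) (hb : ∀ s, |H s| ≤ N)
    (ξ : ℝ) {δ : ℝ} (hδ : 0 ≤ δ) :
    |1 / (d * (l₁ + l₂)) * (expConvIic l₁ H (ξ + δ) + expConvIci l₂ H (ξ + δ)) -
        1 / (d * (l₁ + l₂)) * (expConvIic l₁ H ξ + expConvIci l₂ H ξ)| ≤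
      max |exp (-l₁ * δ) - 1| |exp (l₂ * δ) - 1| * (N / β)
        + δ * N / (d * (l₁ + l₂)) + δ * exp (l₂ * δ) * N / (d * (l₁ + l₂)) := by
  set M := max |exp (-l₁ * δ) - 1| |exp (l₂ * δ) - 1|
  have hK : 0 < 1 / (d * (l₁ + l₂)) := by positivity
  have hN : 0 ≤ N := (abs_nonneg _).trans (hb 0)
  have hA := abs_expConvIic_add_sub_le hl₁ hH hb ξ hδ
  have hB : |expConvIci l₂ H (ξ + δ) - expConvIci l₂ H ξ| ≤
      M * (N / l₂) + δ * exp (l₂ * δ) * N := by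
    have h := abs_expConvIic_add_sub_le (H := fun t => H (-t)) hl₂ (hH.comp measurable_neg)
      (fun s => hb (-s)) (-(ξ + δ)) hδ
    rw [show -(ξ + δ) + δ = -ξ by ring, abs_sub_comm, ← expConvIci_eq_expConvIic_neg,
      ← expConvIci_eq_expConvIic_neg, neg_mul] at h
    refine h.trans (add_le_add ?_ ?_)
    · exact mul_le_mul_of_nonneg_right
        ((abs_exp_neg_sub_one_le (x := l₂ * δ) (by positivity)).trans (le_max_right _ _))
        (by positivity)
    · exact mul_le_mul_of_nonneg_right (le_mul_of_one_le_right hδ (one_le_exp (by positivity))) hN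
  have hA' : |expConvIic l₁ H (ξ + δ) - expConvIic l₁ H ξ| ≤ M * (N / l₁) + δ * N :=
    hA.trans (by gcongr; exact le_max_left _ _)
  calc _ = 1 / (d * (l₁ + l₂)) * |(expConvIic l₁ H (ξ + δ) - expConvIic l₁ H ξ) +
          (expConvIci l₂ H (ξ + δ) - expConvIci l₂ H ξ)| := by
        rw [← mul_sub, abs_mul, abs_of_pos hK]; ring_nf
    _ ≤ 1 / (d * (l₁ + l₂)) * ((M * (N / l₁) + δ * N) + (M * (N / l₂) + δ * exp (l₂ * δ) * N)) :=
        mul_le_mul_of_nonneg_left ((abs_add_le _ _).trans (add_le_add hA' hB)) hK.le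
    _ = _ := by
        rw [← hprod]
        field_simp
        ring

theorem stmt_18_general (d β c NN : ℝ) (hd : 0 < d) (hβ : 0 < β) :
    let l₁ : ℝ := (-c + Real.sqrt (c ^ 2 + 4 * β * d)) / (2 * d)
    let l₂ : ℝ := (c + Real.sqrt (c ^ 2 + 4 * β * d)) / (2 * d)
    (∀ H : ℝ → ℝ, Continuous H → (∀ s, 0 ≤ H s ∧ H s ≤ NN) →
      ∀ ξ δ : ℝ, 0 < δ →
        |Tsc d β c H (ξ + δ) - Tsc d β c H ξ| ≤
          max |Real.exp (-l₁ * δ) - 1| |Real.exp (l₂ * δ) - 1| * (NN / β)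
          + δ * NN / (d * (l₁ + l₂)) + δ * Real.exp (l₂ * δ) * NN / (d * (l₁ + l₂))) ∧
    (∀ ε : ℝ, 0 < ε → ∃ δ₀ : ℝ, 0 < δ₀ ∧
      ∀ H : ℝ → ℝ, Continuous H → (∀ s, 0 ≤ H s ∧ H s ≤ NN) →
        ∀ ξ δ : ℝ, 0 < δ → δ < δ₀ →
          |Tsc d β c H (ξ + δ) - Tsc d β c H ξ| < ε) := by
  intro l₁ l₂
  have hS := abs_lt_sqrt_sq_add (by positivity : 0 < 4 * β * d) c
  have hl₁ : 0 < l₁ := div_pos (by linarith [le_abs_self c]) (by positivity)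
  have hl₂ : 0 < l₂ := div_pos (by linarith [neg_abs_le c]) (by positivity)
  have hprod : d * (l₁ * l₂) = β := mul_quadratic_roots hd.ne' (by positivity)
  have hbound := fun H (hH : Continuous H) (hb : ∀ s, 0 ≤ H s ∧ H s ≤ NN) ξ δ (hδ : 0 < δ) =>
    abs_expConv_twoSided_add_sub_le hd hl₁ hl₂ hprod hH.measurable
      (fun s => abs_le.2 ⟨by linarith [hb s], (hb s).2⟩) ξ hδ.le
  refine ⟨hbound, fun ε hε => ?_⟩
  have hF : Continuous fun δ : ℝ => max |exp (-l₁ * δ) - 1| |exp (l₂ * δ) - 1| * (NN / β)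
      + δ * NN / (d * (l₁ + l₂)) + δ * exp (l₂ * δ) * NN / (d * (l₁ + l₂)) := by fun_prop
  obtain ⟨δ₀, hδ₀, hball⟩ := Metric.continuousAt_iff.1 hF.continuousAt ε hε
  refine ⟨δ₀, hδ₀, fun H hH hb ξ δ hδ hδδ₀ => ?_⟩
  have hsmall := hball (by rwa [Real.dist_eq, sub_zero, abs_of_pos hδ])
  simp only [mul_zero, exp_zero, sub_self, abs_zero, max_self, zero_mul, zero_div, add_zero,
    Real.dist_eq, sub_zero] at hsmall
  exact (hbound H hH hb ξ δ hδ).trans_lt ((le_abs_self _).trans_lt hsmall)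

theorem stmt_18 (d β c NN : ℝ) (hd : 0 < d) (hβ : 0 < β) (hc : 0 < c) (hNN : 0 < NN) :
    let l₁ : ℝ := (-c + Real.sqrt (c ^ 2 + 4 * β * d)) / (2 * d)
    let l₂ : ℝ := (c + Real.sqrt (c ^ 2 + 4 * β * d)) / (2 * d)
    (∀ H : ℝ → ℝ, Continuous H → (∀ s, 0 ≤ H s ∧ H s ≤ NN) →
      ∀ ξ δ : ℝ, 0 < δ →
        |Tsc d β c H (ξ + δ) - Tsc d β c H ξ| ≤
          max |Real.exp (-l₁ * δ) - 1| |Real.exp (l₂ * δ) - 1| * (NN / β)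
          + δ * NN / (d * (l₁ + l₂)) + δ * Real.exp (l₂ * δ) * NN / (d * (l₁ + l₂))) ∧
    (∀ ε : ℝ, 0 < ε → ∃ δ₀ : ℝ, 0 < δ₀ ∧
      ∀ H : ℝ → ℝ, Continuous H → (∀ s, 0 ≤ H s ∧ H s ≤ NN) →
        ∀ ξ δ : ℝ, 0 < δ → δ < δ₀ →
          |Tsc d β c H (ξ + δ) - Tsc d β c H ξ| < ε) :=
  stmt_18_general d β c NN hd hβ
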